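/- Let p be a point sphere complex. Let f^p be a point sphere (isotropic, ⟨f^p,p⟩ = 0) and r an isotropic vector with ⟨f^p,r⟩ = 0, so that f := span{f^p,r} is a contact element with point sphere f^p. Let a ∈ ℝ^{4,2} with ⟨a,a⟩ ≠ 0, ⟨r,a⟩ = 0 and ⟨f^p,a⟩ ≠ 0, and let f̂^p be a nonzero isotropic vector in span{σ_a(f^p), r} with ⟨f̂^p,p⟩ = 0 and f̂^p ∉ span{r} (the point sphere of the Ribaucour transform σ_a(f)). Set γ := span{f^p, f̂^p, r + ⟨r,p⟩p}, the circle of the cyclic circle congruence associated to the Ribaucour pair (f, σ_a(f)). Then for every b ∈ span{a,p} with ⟨b,b⟩ ≠ 0 and every isotropic w ∈ σ_b(span{f^p,r}), the sphere w is orthogonal to the circle γ: ⟨w, v + ⟨v,p⟩p⟩ = 0 for every isotropic v ∈ γ^⊥. In other words, all the Legendre maps σ_b(f), for b in the 2-dimensional space span{a,p}, are orthogonal to the cyclic circle congruence associated to f and σ_a(f). -/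

import Mathlib

/-!
Write `v' := v + ⟨v,p⟩p` for the projection of `v` to `p^⊥`. Since `v ⊥ γ`, the vector `v'` is
orthogonal to `f^p`, `f̂^p`, `r` and `p`. As `f̂^p ∉ span{r}`, exchange gives
`σ_a(f^p) ∈ span{f̂^p, r}`, so `v' ⊥ σ_a(f^p) = f^p - (2⟨f^p,a⟩/⟨a,a⟩) a` with a nonzero
coefficient, hence `v' ⊥ a`. Then `v' ⊥ b` for every `b ∈ span{a,p}`, so `σ_b` does not change
pairings with `v'`, and `v' ⊥ σ_b(f^p), σ_b(r)`, hence `v' ⊥ w`.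
-/

noncomputable section

/-- The symmetric bilinear form of signature (4,2) on ℝ⁶, modelling ℝ^{4,2}. -/
def B (x y : Fin 6 → ℝ) : ℝ :=
  x 0 * y 0 + x 1 * y 1 + x 2 * y 2 + x 3 * y 3 - x 4 * y 4 - x 5 * y 5

/-- The Lie inversion with respect to the linear sphere complex `a`. -/
def lieInv (a x : Fin 6 → ℝ) : Fin 6 → ℝ :=
  x - (2 * B x a / B a a) • a

lemma B_comm (x y : Fin 6 → ℝ) : B x y = B y x := by
  simp only [B]; ring

lemma B_add_left (x y z : Fin 6 → ℝ) : B (x + y) z = B x z + B y z := by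
  simp only [B, Pi.add_apply]; ring

lemma B_add_right (x y z : Fin 6 → ℝ) : B x (y + z) = B x y + B x z := by
  simp only [B, Pi.add_apply]; ring

lemma B_sub_left (x y z : Fin 6 → ℝ) : B (x - y) z = B x z - B y z := by
  simp only [B, Pi.sub_apply]; ring

lemma B_smul_left (c : ℝ) (x y : Fin 6 → ℝ) : B (c • x) y = c * B x y := by
  simp only [B, Pi.smul_apply, smul_eq_mul]; ring

lemma B_smul_right (c : ℝ) (x y : Fin 6 → ℝ) : B x (c • y) = c * B x y := by
  simp only [B, Pi.smul_apply, smul_eq_mul]; ring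

lemma B_lieInv_left (a x y : Fin 6 → ℝ) :
    B (lieInv a x) y = B x y - 2 * B x a / B a a * B a y := by
  rw [lieInv, B_sub_left, B_smul_left]

lemma B_lieInv_left_of_B_eq_zero {a y : Fin 6 → ℝ} (hay : B a y = 0) (x : Fin 6 → ℝ) :
    B (lieInv a x) y = B x y := by
  rw [B_lieInv_left, hay, mul_zero, sub_zero]

lemma B_eq_zero_of_mem_span_pair {x y z u : Fin 6 → ℝ} (hx : B x u = 0) (hy : B y u = 0)
    (hz : z ∈ Submodule.span ℝ ({x, y} : Set (Fin 6 → ℝ))) : B z u = 0 := by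
  obtain ⟨s, t, rfl⟩ := Submodule.mem_span_pair.mp hz
  rw [B_add_left, B_smul_left, B_smul_left, hx, hy]; ring

lemma B_eq_zero_of_B_lieInv_eq_zero {a x y : Fin 6 → ℝ} (ha : B a a ≠ 0) (hxa : B x a ≠ 0)
    (hxy : B x y = 0) (h : B (lieInv a x) y = 0) : B a y = 0 := by
  rw [B_lieInv_left, hxy, zero_sub, neg_eq_zero] at h
  exact (mul_eq_zero.mp h).resolve_left (div_ne_zero (mul_ne_zero two_ne_zero hxa) ha)

section ProjectionAlongPointSphereComplex

variable {p : Fin 6 → ℝ}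

lemma B_add_smul_comm (x v : Fin 6 → ℝ) :
    B x (v + B v p • p) = B v (x + B x p • p) := by
  rw [B_add_right, B_smul_right, B_add_right, B_smul_right, B_comm x v, B_comm x p]; ring

lemma B_add_smul_of_B_eq_zero {x : Fin 6 → ℝ} (hxp : B x p = 0) (v : Fin 6 → ℝ) :
    B x (v + B v p • p) = B v x := by
  rw [B_add_smul_comm, hxp, zero_smul, add_zero]

lemma B_add_smul_self (hp : B p p = -1) (v : Fin 6 → ℝ) : B p (v + B v p • p) = 0 := by
  rw [B_add_right, B_smul_right, hp, B_comm p v]; ring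

end ProjectionAlongPointSphereComplex

theorem stmt_10_general (p fp r a : Fin 6 → ℝ) (hp : B p p = -1)
    (hfpp : B fp p = 0)
    (ha : B a a ≠ 0) (hfa : B fp a ≠ 0)
    (fq : Fin 6 → ℝ) (hfqp : B fq p = 0)
    (hfqmem : fq ∈ Submodule.span ℝ ({lieInv a fp, r} : Set (Fin 6 → ℝ)))
    (hfqr : fq ∉ Submodule.span ℝ ({r} : Set (Fin 6 → ℝ)))
    (γ : Submodule ℝ (Fin 6 → ℝ))
    (hγ : γ = Submodule.span ℝ ({fp, fq, r + B r p • p} : Set (Fin 6 → ℝ))) :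
    ∀ b ∈ Submodule.span ℝ ({a, p} : Set (Fin 6 → ℝ)), B b b ≠ 0 →
      ∀ w : Fin 6 → ℝ, w ≠ 0 → B w w = 0 →
        w ∈ Submodule.span ℝ ({lieInv b fp, lieInv b r} : Set (Fin 6 → ℝ)) →
        ∀ v : Fin 6 → ℝ, v ≠ 0 → B v v = 0 → (∀ x ∈ γ, B v x = 0) →
          B w (v + B v p • p) = 0 := by
  intro b hb _ w _ _ hw v _ _ hvγ
  subst hγ
  have hfp' : B fp (v + B v p • p) = 0 := by
    rw [B_add_smul_of_B_eq_zero hfpp]; exact hvγ fp (Submodule.subset_span (by simp))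
  have hfq' : B fq (v + B v p • p) = 0 := by
    rw [B_add_smul_of_B_eq_zero hfqp]; exact hvγ fq (Submodule.subset_span (by simp))
  have hr' : B r (v + B v p • p) = 0 := by
    rw [B_add_smul_comm]; exact hvγ _ (Submodule.subset_span (by simp))
  have hσa : lieInv a fp ∈ Submodule.span ℝ ({fq, r} : Set (Fin 6 → ℝ)) :=
    mem_span_insert_exchange hfqmem hfqr
  have ha' : B a (v + B v p • p) = 0 :=
    B_eq_zero_of_B_lieInv_eq_zero ha hfa hfp' (B_eq_zero_of_mem_span_pair hfq' hr' hσa)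
  have hb' : B b (v + B v p • p) = 0 :=
    B_eq_zero_of_mem_span_pair ha' (B_add_smul_self hp v) hb
  refine B_eq_zero_of_mem_span_pair ?_ ?_ hw
  · rwa [B_lieInv_left_of_B_eq_zero hb']
  · rwa [B_lieInv_left_of_B_eq_zero hb']

/-- Let `(f, σ_a(f))` be a Ribaucour pair with `f = span{fp,r}`
enveloping the sphere `r`, and let `γ = span{fp, fq, r + ⟨r,p⟩p}` be the circle
of the associated cyclic circle congruence (`fq` the point sphere of `σ_a(f)`).
Then every sphere of every Legendre map `σ_b(f)`, `b ∈ span{a,p}` with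
`⟨b,b⟩ ≠ 0`, is orthogonal to the circle `γ`. -/
theorem stmt_10 (p fp r a : Fin 6 → ℝ) (hp : B p p = -1)
    (hfp : fp ≠ 0) (ifp : B fp fp = 0) (hfpp : B fp p = 0)
    (hr : r ≠ 0) (ir : B r r = 0) (hfr : B fp r = 0)
    (ha : B a a ≠ 0) (hra : B r a = 0) (hfa : B fp a ≠ 0)
    (fq : Fin 6 → ℝ) (hfq : fq ≠ 0) (ifq : B fq fq = 0) (hfqp : B fq p = 0)
    (hfqmem : fq ∈ Submodule.span ℝ ({lieInv a fp, r} : Set (Fin 6 → ℝ)))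
    (hfqr : fq ∉ Submodule.span ℝ ({r} : Set (Fin 6 → ℝ)))
    (γ : Submodule ℝ (Fin 6 → ℝ))
    (hγ : γ = Submodule.span ℝ ({fp, fq, r + B r p • p} : Set (Fin 6 → ℝ))) :
    ∀ b ∈ Submodule.span ℝ ({a, p} : Set (Fin 6 → ℝ)), B b b ≠ 0 →
      ∀ w : Fin 6 → ℝ, w ≠ 0 → B w w = 0 →
        w ∈ Submodule.span ℝ ({lieInv b fp, lieInv b r} : Set (Fin 6 → ℝ)) →
        ∀ v : Fin 6 → ℝ, v ≠ 0 → B v v = 0 → (∀ x ∈ γ, B v x = 0) →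
          B w (v + B v p • p) = 0 :=
  stmt_10_general p fp r a hp hfpp ha hfa fq hfqp hfqmem hfqr γ hγ
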